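/- arXiv:1506.07811 — 2 statements merged into one kernel-verified Lean document; each statement's English description precedes it below -/
import Mathlib

section
/- For every ε ∈ (0,1) there exist R₀ > 0 and c₀ > 0 such that for all R > R₀ and all t_u, t_v ∈ [0,R] with t_u + t_v < R − c₀ and all θ ∈ [0,π] the following hold, where d_H(r,r',θ) = arccosh(cosh r·cosh r' − sinh r·sinh r'·cos θ): (i) if θ ≤ min(2(1−ε)·e^{(t_u+t_v−R)/2}, π), then d_H(R−t_u, R−t_v, θ) < R; (ii) if θ > min(2(1+ε)·e^{(t_u+t_v−R)/2}, π), then d_H(R−t_u, R−t_v, θ) > R. -/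
/-!
With `cos θ = 1 - 2 sin² (θ/2)` the law of cosines reads
`cosh d = cosh (r - r') + 2 sinh r sinh r' sin² (θ/2)`. For `r = R - t_u`, `r' = R - t_v` the
first term is at most `e^{t_u + t_v} < e^{-c₀} e^R`, the `sinh`s are `e^r / 2` up to a factor
`1 - e^{-c₀}`, and `sin (θ/2) = θ/2` up to a factor `1 - O(e^{-c₀})` in the relevant range, so
`cosh d ≈ (e^R / 2) (θ / (2 e^{(t_u + t_v - R)/2}))²` while `cosh R ≈ e^R / 2`.
With `e^{-c₀} = ε/8` all these errors are dominated by the factors `(1 ± ε)²`.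
-/

open Real Filter

noncomputable section

/-- The inverse hyperbolic cosine. -/
def arcosh (x : ℝ) : ℝ := Real.log (x + Real.sqrt (x ^ 2 - 1))

/-- The hyperbolic distance between two points at radii `r`, `r'` with relative
angle `θ`, via the hyperbolic law of cosines. -/
def hypDistPolar (r r' θ : ℝ) : ℝ :=
  _root_.arcosh (Real.cosh r * Real.cosh r' - Real.sinh r * Real.sinh r' * Real.cos θ)

namespace Real

theorem cosh_le_exp_abs (x : ℝ) : cosh x ≤ exp |x| := by
  rw [← cosh_abs, cosh_eq]
  have : exp (-|x|) ≤ exp |x| := exp_le_exp.2 (by linarith [abs_nonneg x])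
  linarith

theorem sinh_le_exp_div_two (x : ℝ) : sinh x ≤ exp x / 2 := by
  rw [sinh_eq]; linarith [exp_pos (-x)]

theorem exp_div_two_le_cosh (x : ℝ) : exp x / 2 ≤ cosh x := by
  rw [cosh_eq]; linarith [exp_pos (-x)]

theorem exp_mul_one_sub_div_two_le_sinh {x δ : ℝ} (h : exp (-2 * x) ≤ δ) :
    exp x * (1 - δ) / 2 ≤ sinh x := by
  have : exp (-x) = exp x * exp (-2 * x) := by rw [← exp_add]; ring_nf
  rw [sinh_eq, this]
  nlinarith [exp_pos x]

theorem cosh_le_exp_mul_one_add_div_two {x δ : ℝ} (h : exp (-2 * x) ≤ δ) :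
    cosh x ≤ exp x * (1 + δ) / 2 := by
  have : exp (-x) = exp x * exp (-2 * x) := by rw [← exp_add]; ring_nf
  rw [cosh_eq, this]
  nlinarith [exp_pos x]

theorem mul_one_sub_le_sin {y δ : ℝ} (hy : 0 ≤ y) (hyδ : y ^ 2 ≤ 6 * δ) :
    y * (1 - δ) ≤ sin y := by
  nlinarith [sin_ge_sub_cube hy]

theorem arcosh_lt_iff_lt_cosh {a x : ℝ} (ha : 0 < a) (hx : 0 ≤ x) :
    Real.arcosh a < x ↔ a < cosh x := by
  conv_lhs => rw [← arcosh_cosh hx]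
  exact arcosh_lt_arcosh ha (cosh_pos x)

theorem lt_arcosh_iff_cosh_lt {a x : ℝ} (ha : 0 < a) (hx : 0 ≤ x) :
    x < Real.arcosh a ↔ cosh x < a := by
  conv_lhs => rw [← arcosh_cosh hx]
  exact arcosh_lt_arcosh (cosh_pos x) ha

end Real

def coshHypDistPolar (r r' θ : ℝ) : ℝ :=
  cosh r * cosh r' - sinh r * sinh r' * cos θ

theorem hypDistPolar_eq_arcosh (r r' θ : ℝ) :
    hypDistPolar r r' θ = Real.arcosh (coshHypDistPolar r r' θ) :=
  rfl

theorem coshHypDistPolar_eq (r r' θ : ℝ) :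
    coshHypDistPolar r r' θ = cosh (r - r') + 2 * sinh r * sinh r' * sin (θ / 2) ^ 2 := by
  have hcos : cos θ = 1 - 2 * sin (θ / 2) ^ 2 := by
    have h := cos_two_mul' (θ / 2)
    rw [mul_div_cancel₀ θ two_ne_zero] at h
    linarith [cos_sq_add_sin_sq (θ / 2)]
  rw [coshHypDistPolar, hcos, cosh_sub]
  ring

theorem one_le_coshHypDistPolar {r r' : ℝ} (hr : 0 ≤ r) (hr' : 0 ≤ r') (θ : ℝ) :
    1 ≤ coshHypDistPolar r r' θ := by
  have : 0 ≤ 2 * sinh r * sinh r' * sin (θ / 2) ^ 2 := by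
    have := sinh_nonneg_iff.2 hr
    have := sinh_nonneg_iff.2 hr'
    positivity
  rw [coshHypDistPolar_eq]
  linarith [one_le_cosh (r - r')]

theorem hypDistPolar_lt_iff {r r' R : ℝ} (hr : 0 ≤ r) (hr' : 0 ≤ r') (hR : 0 ≤ R)
    (θ : ℝ) :
    hypDistPolar r r' θ < R ↔ coshHypDistPolar r r' θ < cosh R := by
  rw [hypDistPolar_eq_arcosh]
  exact Real.arcosh_lt_iff_lt_cosh (zero_lt_one.trans_le (one_le_coshHypDistPolar hr hr' θ)) hR

theorem lt_hypDistPolar_iff {r r' R : ℝ} (hr : 0 ≤ r) (hr' : 0 ≤ r') (hR : 0 ≤ R)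
    (θ : ℝ) :
    R < hypDistPolar r r' θ ↔ cosh R < coshHypDistPolar r r' θ :=
  Real.lt_arcosh_iff_cosh_lt (zero_lt_one.trans_le (one_le_coshHypDistPolar hr hr' θ)) hR

theorem coshHypDistPolar_le {r r' : ℝ} (hr' : 0 ≤ r') (θ : ℝ) :
    coshHypDistPolar r r' θ ≤ exp |r - r'| + exp (r + r') * sin (θ / 2) ^ 2 / 2 := by
  have hsinh : sinh r * sinh r' ≤ exp r / 2 * (exp r' / 2) :=
    mul_le_mul (sinh_le_exp_div_two r) (sinh_le_exp_div_two r') (sinh_nonneg_iff.2 hr')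
      (by positivity)
  have hs := sq_nonneg (sin (θ / 2))
  rw [coshHypDistPolar_eq, exp_add]
  nlinarith [cosh_le_exp_abs (r - r')]

theorem le_coshHypDistPolar {r r' δ : ℝ} (hδ : δ ≤ 1) (hr : exp (-2 * r) ≤ δ)
    (hr' : exp (-2 * r') ≤ δ) (θ : ℝ) :
    1 + exp (r + r') * (1 - δ) ^ 2 * sin (θ / 2) ^ 2 / 2 ≤ coshHypDistPolar r r' θ := by
  have hlow := exp_mul_one_sub_div_two_le_sinh hr
  have hsinh : exp r * (1 - δ) / 2 * (exp r' * (1 - δ) / 2) ≤ sinh r * sinh r' :=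
    mul_le_mul hlow (exp_mul_one_sub_div_two_le_sinh hr')
      (by have := exp_pos r'; nlinarith) (le_trans (by have := exp_pos r; nlinarith) hlow)
  have hs := sq_nonneg (sin (θ / 2))
  rw [coshHypDistPolar_eq, exp_add]
  nlinarith [one_le_cosh (r - r')]

theorem one_add_le_sq_mul_pow_four {ε : ℝ} (hε : 0 < ε) (hε1 : ε < 1) :
    1 + ε / 8 ≤ (1 + ε) ^ 2 * (1 - ε / 8) ^ 4 := by
  have hbern : 1 - ε / 2 ≤ (1 - ε / 8) ^ 4 := by
    have := one_add_mul_le_pow (a := -(ε / 8)) (by linarith) 4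
    push_cast at this
    linarith
  nlinarith [mul_le_mul_of_nonneg_left hbern (sq_nonneg (1 + ε)), mul_pos hε hε]

theorem exp_add_mul_exp_half_sq (R tu tv : ℝ) :
    exp ((R - tu) + (R - tv)) * exp ((tu + tv - R) / 2) ^ 2 = exp R := by
  rw [sq, ← exp_add, ← exp_add]
  ring_nf

section RelativeAngle

variable {ε R tu tv θ : ℝ}

theorem hypDistPolar_lt_of_angle_le (hε1 : ε < 1) (htu : tu ∈ Set.Icc 0 R)
    (htv : tv ∈ Set.Icc 0 R) (hsmall : exp (tu + tv - R) < ε / 8) (hθ0 : 0 ≤ θ)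
    (hθ : θ ≤ 2 * (1 - ε) * exp ((tu + tv - R) / 2)) :
    hypDistPolar (R - tu) (R - tv) θ < R := by
  have hε : 0 < ε := by linarith [exp_pos (tu + tv - R)]
  obtain ⟨htu0, htuR⟩ := htu
  obtain ⟨htv0, htvR⟩ := htv
  set X := exp ((tu + tv - R) / 2)
  have hsin : sin (θ / 2) ^ 2 ≤ ((1 - ε) * X) ^ 2 :=
    sin_sq_le_sq.trans (pow_le_pow_left₀ (by linarith) (by linarith) 2)
  have hdiff : exp |(R - tu) - (R - tv)| < ε / 8 * exp R := by
    calc exp |(R - tu) - (R - tv)| ≤ exp (tu + tv - R) * exp R := by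
          rw [← exp_add, exp_le_exp, abs_le]; constructor <;> linarith
      _ < ε / 8 * exp R := mul_lt_mul_of_pos_right hsmall (exp_pos R)
  have hscale := exp_add_mul_exp_half_sq R tu tv
  rw [hypDistPolar_lt_iff (by linarith) (by linarith) (by linarith)]
  calc coshHypDistPolar (R - tu) (R - tv) θ
      ≤ exp |(R - tu) - (R - tv)| + exp ((R - tu) + (R - tv)) * sin (θ / 2) ^ 2 / 2 :=
        coshHypDistPolar_le (by linarith) θ
    _ < ε / 8 * exp R + (1 - ε) ^ 2 * exp R / 2 := by
        have := mul_le_mul_of_nonneg_left hsin (exp_pos ((R - tu) + (R - tv))).le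
        nlinarith
    _ ≤ exp R / 2 := by
        have : ε / 8 + (1 - ε) ^ 2 / 2 ≤ 1 / 2 := by nlinarith
        nlinarith [mul_le_mul_of_nonneg_left this (exp_pos R).le]
    _ ≤ cosh R := exp_div_two_le_cosh R

theorem lt_hypDistPolar_of_lt_angle (hε1 : ε < 1) (htu : tu ∈ Set.Icc 0 R)
    (htv : tv ∈ Set.Icc 0 R) (hsmall : exp (tu + tv - R) < ε / 8) (hθπ : θ ≤ π)
    (hθ : 2 * (1 + ε) * exp ((tu + tv - R) / 2) < θ) :
    R < hypDistPolar (R - tu) (R - tv) θ := by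
  have hε : 0 < ε := by linarith [exp_pos (tu + tv - R)]
  obtain ⟨htu0, htuR⟩ := htu
  obtain ⟨htv0, htvR⟩ := htv
  have hexp_le (x : ℝ) (hx : x ≤ tu + tv - R) : exp x ≤ ε / 8 :=
    (exp_le_exp.2 hx).trans hsmall.le
  set Y := (1 + ε) * exp ((tu + tv - R) / 2)
  have hY : 0 < Y := by positivity
  have hY2 : Y ^ 2 ≤ 6 * (ε / 8) := by
    have : exp ((tu + tv - R) / 2) ^ 2 = exp (tu + tv - R) := by
      rw [← exp_nat_mul]; ring_nf
    rw [mul_pow, this]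
    nlinarith [mul_le_mul (show (1 + ε) ^ 2 ≤ 4 by nlinarith) hsmall.le (exp_pos _).le
      (by norm_num)]
  have hsin : (Y * (1 - ε / 8)) ^ 2 ≤ sin (θ / 2) ^ 2 := by
    have hlt := sin_lt_sin_of_lt_of_le_pi_div_two (by linarith [pi_pos]) (by linarith)
      (show Y < θ / 2 by linarith)
    exact pow_le_pow_left₀ (by nlinarith) ((mul_one_sub_le_sin hY.le hY2).trans hlt.le) 2
  have hscale := exp_add_mul_exp_half_sq R tu tv
  rw [lt_hypDistPolar_iff (by linarith) (by linarith) (by linarith)]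
  calc cosh R ≤ exp R * (1 + ε / 8) / 2 :=
        cosh_le_exp_mul_one_add_div_two (hexp_le _ (by linarith))
    _ ≤ exp R * ((1 + ε) ^ 2 * (1 - ε / 8) ^ 4) / 2 := by
        gcongr; exact one_add_le_sq_mul_pow_four hε hε1
    _ = exp ((R - tu) + (R - tv)) * (1 - ε / 8) ^ 2 * (Y * (1 - ε / 8)) ^ 2 / 2 := by
        rw [← hscale]; ring
    _ ≤ exp ((R - tu) + (R - tv)) * (1 - ε / 8) ^ 2 * sin (θ / 2) ^ 2 / 2 := by gcongr
    _ < 1 + exp ((R - tu) + (R - tv)) * (1 - ε / 8) ^ 2 * sin (θ / 2) ^ 2 / 2 := by linarith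
    _ ≤ coshHypDistPolar (R - tu) (R - tv) θ :=
        le_coshHypDistPolar (by linarith) (hexp_le _ (by linarith)) (hexp_le _ (by linarith)) θ

end RelativeAngle

/-- Lemma 2.3 of the paper (characterization of adjacency via relative angle):
for `ε ∈ (0,1)` there are `R₀, c₀ > 0` so that for `R > R₀` and types with
`t_u + t_v < R - c₀`: if the relative angle is at most
`min(2(1-ε) e^{(t_u+t_v-R)/2}, π)` then the points are within distance `R`, and if it
exceeds `min(2(1+ε) e^{(t_u+t_v-R)/2}, π)` then they are at distance more than `R`. -/
theorem relative_angle_characterization (ε : ℝ) (hε₁ : 0 < ε) (hε₂ : ε < 1) :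
    ∃ R₀ > (0 : ℝ), ∃ c₀ > (0 : ℝ), ∀ R > R₀, ∀ tu tv : ℝ,
      tu ∈ Set.Icc 0 R → tv ∈ Set.Icc 0 R → tu + tv < R - c₀ →
      ∀ θ ∈ Set.Icc 0 π,
        (θ ≤ min (2 * (1 - ε) * Real.exp ((tu + tv - R) / 2)) π →
          hypDistPolar (R - tu) (R - tv) θ < R) ∧
        (min (2 * (1 + ε) * Real.exp ((tu + tv - R) / 2)) π < θ →
          R < hypDistPolar (R - tu) (R - tv) θ) := by
  have hc₀ : 0 < log (8 / ε) := log_pos (by rw [lt_div_iff₀ hε₁]; linarith)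
  refine ⟨1, one_pos, log (8 / ε), hc₀, fun R _ tu tv htu htv hsum θ hθ => ?_⟩
  have hsmall : exp (tu + tv - R) < ε / 8 :=
    calc exp (tu + tv - R) < exp (-log (8 / ε)) := exp_lt_exp.2 (by linarith)
      _ = ε / 8 := by rw [exp_neg, exp_log (by positivity), inv_div]
  refine ⟨fun h => ?_, fun h => ?_⟩
  · exact hypDistPolar_lt_of_angle_le hε₂ htu htv hsmall hθ.1 (le_min_iff.1 h).1
  · exact lt_hypDistPolar_of_lt_angle hε₂ htu htv hsmall hθ.2
      ((min_lt_iff.1 h).resolve_right hθ.2.not_gt)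
end
end

section
/- Let R > 0 and let z = (r_z, θ_z), y = (r_y, θ_y), w = (r_w, θ_w) be points in the disk of radius R (so r_z, r_y, r_w ∈ [0,R]), such that y lies angularly between z and w: the relative angles satisfy θ_{z,y} + θ_{y,w} = θ_{z,w} ≤ π, where θ_{p,q} denotes the relative angle between p and q. If d_H(z,w) ≤ R and r_y ≤ r_w, then d_H(y,z) ≤ R. Likewise, if d_H(z,w) ≤ R and r_y ≤ r_z, then d_H(y,w) ≤ R. Here d_H is the hyperbolic distance: cosh d_H((r,θ),(r',θ')) = cosh r·cosh r' − sinh r·sinh r'·cos(θ−θ'). -/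
/-!
For a fixed point `z` at radius `a`, the quantity `cosh d_H(z, ·)` at relative angle `φ ≤ π`
is `cosh a · cosh r - sinh a · cos φ · sinh r`. It grows as the angle grows, and as a function
of the radius `r` it is convex (a nonnegative combination of `eʳ` and `e⁻ʳ`), so on `[0, r_w]`
it is bounded by its values at the endpoints: `cosh r_z ≤ cosh R` at the origin and
`cosh d_H(z, w) ≤ cosh R` at `w`. Shrinking the angle to `θ_{z,y}` and the radius to `r_y`
therefore keeps `y` within distance `R` of `z`; the second claim is the first with `z` and `w`
exchanged.
-/

open Real

noncomputable section

/-- The cosh of the hyperbolic distance between two points of the hyperbolic plane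
given in polar coordinates `(r, θ)`, via the hyperbolic law of cosines. -/
def coshDist (p q : ℝ × ℝ) : ℝ :=
  Real.cosh p.1 * Real.cosh q.1 - Real.sinh p.1 * Real.sinh q.1 * Real.cos (p.2 - q.2)

/-- The relative angle (in `[0, π]`) between two angular coordinates. -/
def relAngle (θ θ' : ℝ) : ℝ := |((θ - θ' : ℝ) : Real.Angle).toReal|

theorem convexOn_mul_cosh_sub_mul_sinh {A B : ℝ} (hBA : |B| ≤ A) :
    ConvexOn ℝ Set.univ (fun r ↦ A * cosh r - B * sinh r) := by
  obtain ⟨hnegA, hB⟩ := abs_le.mp hBA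
  have hexp_neg : ConvexOn ℝ Set.univ (fun r ↦ exp (-r)) :=
    convexOn_exp.comp_linearMap (-LinearMap.id)
  refine ((convexOn_exp.smul (by linarith : 0 ≤ (A - B) / 2)).add
    (hexp_neg.smul (by linarith : 0 ≤ (A + B) / 2))).congr fun r _ ↦ ?_
  simp only [Pi.add_apply, smul_eq_mul, cosh_eq, sinh_eq]
  ring

theorem abs_sinh_mul_cos_le_cosh (a φ : ℝ) : |sinh a * cos φ| ≤ cosh a :=
  calc |sinh a * cos φ| ≤ |sinh a| := by
        rw [abs_mul]; exact mul_le_of_le_one_right (abs_nonneg _) (abs_cos_le_one φ)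
    _ = sinh |a| := abs_sinh a
    _ ≤ cosh a := by rw [← cosh_abs]; exact (sinh_lt_cosh _).le

theorem cosh_mul_cosh_sub_le_max {a b c : ℝ} (φ : ℝ) (hb : 0 ≤ b) (hbc : b ≤ c) :
    cosh a * cosh b - sinh a * sinh b * cos φ ≤
      max (cosh a) (cosh a * cosh c - sinh a * sinh c * cos φ) := by
  have hconv := convexOn_mul_cosh_sub_mul_sinh (abs_sinh_mul_cos_le_cosh a φ)
  have hseg : b ∈ segment ℝ 0 c := by rw [segment_eq_Icc (hb.trans hbc)]; exact ⟨hb, hbc⟩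
  have := hconv.le_on_segment (Set.mem_univ 0) (Set.mem_univ c) hseg
  simpa only [cosh_zero, sinh_zero, mul_one, mul_zero, zero_mul, sub_zero,
    mul_right_comm (sinh a) (cos φ)] using this

theorem cosh_mul_cosh_sub_le_of_angle_le {a b ψ φ : ℝ} (ha : 0 ≤ a) (hb : 0 ≤ b) (hψ : 0 ≤ ψ)
    (hψφ : ψ ≤ φ) (hφ : φ ≤ π) :
    cosh a * cosh b - sinh a * sinh b * cos ψ ≤ cosh a * cosh b - sinh a * sinh b * cos φ := by
  have hcos : cos φ ≤ cos ψ := cos_le_cos_of_nonneg_of_le_pi hψ hφ hψφ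
  have hsinh : 0 ≤ sinh a * sinh b := mul_nonneg (sinh_nonneg_iff.mpr ha) (sinh_nonneg_iff.mpr hb)
  nlinarith

theorem relAngle_nonneg (θ θ' : ℝ) : 0 ≤ relAngle θ θ' := abs_nonneg _

theorem relAngle_le_pi (θ θ' : ℝ) : relAngle θ θ' ≤ π := Real.Angle.abs_toReal_le_pi _

theorem relAngle_comm (θ θ' : ℝ) : relAngle θ θ' = relAngle θ' θ := by
  rw [relAngle, relAngle, ← neg_sub, Real.Angle.coe_neg, Real.Angle.abs_toReal_neg]

theorem cos_relAngle (θ θ' : ℝ) : cos (relAngle θ θ') = cos (θ - θ') := by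
  rw [relAngle, cos_abs, Real.Angle.cos_toReal, Real.Angle.cos_coe]

theorem coshDist_eq (p q : ℝ × ℝ) :
    coshDist p q = cosh p.1 * cosh q.1 - sinh p.1 * sinh q.1 * cos (relAngle p.2 q.2) := by
  rw [coshDist, cos_relAngle]

theorem coshDist_comm (p q : ℝ × ℝ) : coshDist p q = coshDist q p := by
  rw [coshDist_eq, coshDist_eq, relAngle_comm]
  ring

theorem coshDist_le_of_relAngle_le {R : ℝ} {z y w : ℝ × ℝ} (hz : z.1 ∈ Set.Icc 0 R)
    (hy : 0 ≤ y.1) (hyw : y.1 ≤ w.1) (hangle : relAngle z.2 y.2 ≤ relAngle z.2 w.2)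
    (hzw : coshDist z w ≤ cosh R) : coshDist z y ≤ cosh R := by
  have hzR : cosh z.1 ≤ cosh R := by
    rw [cosh_le_cosh, abs_of_nonneg hz.1, abs_of_nonneg (hz.1.trans hz.2)]
    exact hz.2
  rw [coshDist_eq] at hzw ⊢
  calc _ ≤ cosh z.1 * cosh y.1 - sinh z.1 * sinh y.1 * cos (relAngle z.2 w.2) :=
        cosh_mul_cosh_sub_le_of_angle_le hz.1 hy (relAngle_nonneg _ _) hangle (relAngle_le_pi _ _)
    _ ≤ max (cosh z.1) (cosh z.1 * cosh w.1 - sinh z.1 * sinh w.1 * cos (relAngle z.2 w.2)) :=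
        cosh_mul_cosh_sub_le_max _ hy hyw
    _ ≤ cosh R := max_le hzR hzw

theorem between_point_adjacent_general (R : ℝ) (z y w : ℝ × ℝ)
    (hz : z.1 ∈ Set.Icc 0 R) (hy : y.1 ∈ Set.Icc 0 R) (hw : w.1 ∈ Set.Icc 0 R)
    (hbetween : relAngle z.2 y.2 + relAngle y.2 w.2 = relAngle z.2 w.2)
    (hzw : coshDist z w ≤ Real.cosh R) :
    (y.1 ≤ w.1 → coshDist y z ≤ Real.cosh R) ∧
    (y.1 ≤ z.1 → coshDist y w ≤ Real.cosh R) := by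
  have hθzy := relAngle_nonneg z.2 y.2
  have hθyw := relAngle_nonneg y.2 w.2
  refine ⟨fun hyw_le ↦ ?_, fun hyz_le ↦ ?_⟩
  · rw [coshDist_comm]
    exact coshDist_le_of_relAngle_le hz hy.1 hyw_le (by linarith) hzw
  · rw [coshDist_comm] at hzw ⊢
    refine coshDist_le_of_relAngle_le hw hy.1 hyz_le ?_ hzw
    rw [relAngle_comm w.2, relAngle_comm w.2]
    linarith

/-- Claim 4.1 of the paper: if `y` lies angularly between `z` and `w`, the points `z`
and `w` are within hyperbolic distance `R`, and `y` has radius at most that of `w`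
(resp. of `z`), then `y` is within hyperbolic distance `R` of `z` (resp. of `w`). -/
theorem between_point_adjacent (R : ℝ) (hR : 0 < R) (z y w : ℝ × ℝ)
    (hz : z.1 ∈ Set.Icc 0 R) (hy : y.1 ∈ Set.Icc 0 R) (hw : w.1 ∈ Set.Icc 0 R)
    (hbetween : relAngle z.2 y.2 + relAngle y.2 w.2 = relAngle z.2 w.2)
    (hπ : relAngle z.2 w.2 ≤ π)
    (hzw : coshDist z w ≤ Real.cosh R) :
    (y.1 ≤ w.1 → coshDist y z ≤ Real.cosh R) ∧
    (y.1 ≤ z.1 → coshDist y w ≤ Real.cosh R) :=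
  between_point_adjacent_general R z y w hz hy hw hbetween hzw
end
end
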